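/- Fix any basis D_1,…,D_7 of the space of traceless real diagonal 8×8 matrices. For all real parameters x^α (α = 1,…,7), x^{ij} (1 ≤ i < j ≤ 8), x^I (I ∈ I_8), the Iwasawa coset representative C(x) = exp(Σ_α x^α h_{D_α}) · Π_{i<j} exp(x^{ij} J⁺_{ij}) · Π_{I ∈ I_8} exp(x^I λ_I) is a symplectic matrix: C(x)ᵀ Ω C(x) = Ω, where Ω = [[0, −I_28],[I_28, 0]]. -/

import Mathlib

open Matrix

/-- Index set for the 28-dimensional space `Λ²(ℝ⁸)`: ordered pairs `i < j` in `Fin 8`. -/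
abbrev PairIdx : Type := {p : Fin 8 × Fin 8 // p.1 < p.2}

/-- Index set for the 56-dimensional space `W = Λ²V ⊕ Λ²(V*)`. -/
abbrev WIdx : Type := PairIdx ⊕ PairIdx

/-- The action of an `8×8` matrix `M` on `Λ²V`, `M(eᵢ ∧ eⱼ) = (M eᵢ) ∧ eⱼ + eᵢ ∧ (M eⱼ)`,
written as a `28×28` matrix in the basis `{e_{ij}}_{i<j}`. -/
def lam2 (M : Matrix (Fin 8) (Fin 8) ℝ) : Matrix PairIdx PairIdx ℝ :=
  Matrix.of fun a b =>
    M a.1.1 b.1.1 * (if a.1.2 = b.1.2 then 1 else 0)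
    - M a.1.2 b.1.1 * (if a.1.1 = b.1.2 then 1 else 0)
    + M a.1.2 b.1.2 * (if a.1.1 = b.1.1 then 1 else 0)
    - M a.1.1 b.1.2 * (if a.1.2 = b.1.1 then 1 else 0)

/-- The `56×56` extension of an `8×8` matrix `M` to `W = Λ²V ⊕ Λ²(V*)`:
it acts on `Λ²V` as `lam2 M` and on `Λ²(V*)` by minus the transpose of this action. -/
def extW (M : Matrix (Fin 8) (Fin 8) ℝ) : Matrix WIdx WIdx ℝ :=
  Matrix.fromBlocks (lam2 M) 0 0 (-(lam2 M)ᵀ)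

/-- The antisymmetric `8×8` matrix `A_{kl} eᵢ = δ_{li} e_k − δ_{ki} e_l`. -/
def Amat (k l : Fin 8) : Matrix (Fin 8) (Fin 8) ℝ :=
  Matrix.of fun a b => (if a = k ∧ b = l then 1 else 0) - (if a = l ∧ b = k then 1 else 0)

/-- The symmetric `8×8` matrix `S_{kl} eᵢ = δ_{li} e_k + δ_{ki} e_l`. -/
def Smat (k l : Fin 8) : Matrix (Fin 8) (Fin 8) ℝ :=
  Matrix.of fun a b => (if a = k ∧ b = l then 1 else 0) + (if a = l ∧ b = k then 1 else 0)

/-- `J⁺_{kl} = (S_{kl} + A_{kl})/√2` as a `56×56` matrix. -/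
noncomputable def Jplus (k l : Fin 8) : Matrix WIdx WIdx ℝ :=
  (Real.sqrt 2)⁻¹ • (extW (Smat k l) + extW (Amat k l))

/-- `J⁻_{kl} = (S_{kl} − A_{kl})/√2` as a `56×56` matrix. -/
noncomputable def Jminus (k l : Fin 8) : Matrix WIdx WIdx ℝ :=
  (Real.sqrt 2)⁻¹ • (extW (Smat k l) - extW (Amat k l))

/-- `h_D` for a diagonal matrix `D = diag d`: acts by `(dᵢ + dⱼ)` on `e_{ij}` and
`−(dᵢ + dⱼ)` on `ε^{ij}`. -/
def hD (d : Fin 8 → ℝ) : Matrix WIdx WIdx ℝ := extW (Matrix.diagonal d)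

/-- Tetra-indices: strictly increasing 4-tuples in `{1,…,8}`. -/
abbrev TetraIdx : Type := {f : Fin 4 → Fin 8 // StrictMono f}

/-- The 8-index Levi-Civita symbol. -/
noncomputable def levi (f : Fin 8 → Fin 8) : ℝ :=
  if h : Function.Bijective f then ((Equiv.Perm.sign (Equiv.ofBijective f h) : ℤ) : ℝ) else 0

/-- The rank-4 generalized Kronecker delta `δ^{j₁j₂j₃j₄}_{i₁i₂i₃i₄}`. -/
noncomputable def gdelta (i j : Fin 4 → Fin 8) : ℝ :=
  ∑ σ : Equiv.Perm (Fin 4),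
    ((Equiv.Perm.sign σ : ℤ) : ℝ) * ∏ t : Fin 4, (if j t = i (σ t) then 1 else 0)

/-- `ε_{i₁i₂i₃i₄ a₁a₂ b₁b₂}` for a tetra-index `I` and pair indices `a`, `b`. -/
noncomputable def leviI (I : TetraIdx) (a b : PairIdx) : ℝ :=
  levi ![I.val 0, I.val 1, I.val 2, I.val 3, a.1.1, a.1.2, b.1.1, b.1.2]

/-- `δ^{a₁ a₂ b₁ b₂}_{i₁i₂i₃i₄}` for a tetra-index `I` and pair indices `a`, `b`. -/
noncomputable def gdeltaI (I : TetraIdx) (a b : PairIdx) : ℝ :=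
  gdelta I.val ![a.1.1, a.1.2, b.1.1, b.1.2]

/-- The `56×56` matrix `λ_I`: block off-diagonal w.r.t. `W = Λ²V ⊕ Λ²(V*)`, with
`λ_I(e_{j₁j₂}) = ∑_{k₁<k₂} ε_{I j₁j₂k₁k₂} ε^{k₁k₂}` and
`λ_I(ε^{j₁j₂}) = ∑_{k₁<k₂} δ^{j₁j₂k₁k₂}_I e_{k₁k₂}`. -/
noncomputable def lamT (I : TetraIdx) : Matrix WIdx WIdx ℝ :=
  Matrix.fromBlocks 0 (Matrix.of fun K J => gdeltaI I J K) (Matrix.of fun K J => leviI I J K) 0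

/-- The symplectic metric `Ω`. -/
def OmegaW : Matrix WIdx WIdx ℝ :=
  Matrix.fromBlocks 0 (-1) 1 0

/-- The pair index `(1,2)` (i.e. `(0,1)` in 0-based indexing). -/
def pair01 : PairIdx := ⟨(0, 1), by decide⟩

open NormedSpace in
/-- The Iwasawa coset representative
`C(x) = exp(Σ_α x^α h_{D_α}) · Π_{i<j} exp(x^{ij} J⁺_{ij}) · Π_{I ∈ I₈} exp(x^I λ_I)`,
the products over `i<j` and over `I ∈ I₈` being taken in a fixed order. -/
noncomputable def iwasawaC (D : Fin 7 → Fin 8 → ℝ) (x : Fin 7 → ℝ)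
    (y : PairIdx → ℝ) (z : TetraIdx → ℝ) : Matrix WIdx WIdx ℝ :=
  exp (∑ α, x α • hD (D α)) *
    (((Finset.univ : Finset PairIdx).toList).map
        (fun p => exp (y p • Jplus p.1.1 p.1.2))).prod *
    (((Finset.univ.filter (fun I : TetraIdx => I.val 3 = 7)).toList).map
        (fun I => exp (z I • lamT I))).prod

/-! The generators `h_D`, `J⁺_{kl}` and `λ_I` all lie in the symplectic Lie algebra `sp(28)`:
`h_D` and `J⁺_{kl}` act as `M ↦ diag(M, -Mᵀ)`, and `λ_I` is block off-diagonal with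
symmetric blocks, the symmetry coming from the evenness of the permutation `(a b) ↦ (b a)` of
two index pairs. The exponential of an element of `sp` is symplectic, and symplectic matrices
form a monoid, so `C(x)` is symplectic. -/

open NormedSpace LieAlgebra.Symplectic

attribute [local instance] LieRing.ofAssociativeRing

namespace Matrix

variable {m 𝔸 : Type*} [Fintype m] [DecidableEq m] [NormedCommRing 𝔸] [NormedAlgebra ℚ 𝔸]
  [CompleteSpace 𝔸]

/-- Skew-adjointness says `J A = (-Aᵀ) J`, hence `J exp A = exp (-Aᵀ) J`. -/
theorem IsSkewAdjoint.exp_transpose_mul_mul_exp {J A : Matrix m m 𝔸} (hA : J.IsSkewAdjoint A) :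
    (exp A)ᵀ * J * exp A = J := by
  have hconj : SemiconjBy J A (-Aᵀ) := by
    rw [SemiconjBy, neg_mul, hA, mul_neg, neg_neg]
  let : NormedRing (Matrix m m 𝔸) := Matrix.linftyOpNormedRing
  let : NormedAlgebra ℚ (Matrix m m 𝔸) := Matrix.linftyOpNormedAlgebra
  -- the operator norm induces the product uniformity
  have : @CompleteSpace (Matrix m m 𝔸) PseudoMetricSpace.toUniformSpace :=
    inferInstanceAs (CompleteSpace (m → m → 𝔸))
  rw [← exp_transpose, ← neg_neg Aᵀ]
  exact hconj.exp_neg_mul_mul_exp_eq_self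

end Matrix

namespace LieAlgebra.Symplectic

variable {l : Type*} [Fintype l] [DecidableEq l]

theorem fromBlocks_neg_transpose_mem_sp {R : Type*} [CommRing R] (A : Matrix l l R) :
    fromBlocks A 0 0 (-Aᵀ) ∈ sp l R := by
  simp [sp, Matrix.IsSkewAdjoint, Matrix.IsAdjointPair, J, fromBlocks_transpose,
    fromBlocks_multiply, fromBlocks_neg]

theorem fromBlocks_zero_mem_sp_of_isSymm {R : Type*} [CommRing R] {B C : Matrix l l R}
    (hB : B.IsSymm) (hC : C.IsSymm) : fromBlocks 0 B C 0 ∈ sp l R := by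
  simp [sp, Matrix.IsSkewAdjoint, Matrix.IsAdjointPair, J, fromBlocks_transpose,
    fromBlocks_multiply, fromBlocks_neg, hB.eq, hC.eq]

variable {𝕜 : Type*} [NormedCommRing 𝕜] [NormedAlgebra ℚ 𝕜] [CompleteSpace 𝕜]

theorem exp_mem_symplecticGroup {A : Matrix (l ⊕ l) (l ⊕ l) 𝕜}
    (hA : A ∈ sp l 𝕜) : exp A ∈ symplecticGroup l 𝕜 :=
  SymplecticGroup.mem_iff'.2
    ((mem_skewAdjointMatricesSubmodule _ _).1 hA).exp_transpose_mul_mul_exp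

theorem list_prod_map_exp_mem_symplecticGroup {ι : Type*} (s : List ι)
    {A : ι → Matrix (l ⊕ l) (l ⊕ l) 𝕜} (hA : ∀ i, A i ∈ sp l 𝕜) :
    (s.map fun i => exp (A i)).prod ∈ symplecticGroup l 𝕜 :=
  list_prod_mem fun _ hM => by
    obtain ⟨i, -, rfl⟩ := List.mem_map.1 hM
    exact exp_mem_symplecticGroup (hA i)

end LieAlgebra.Symplectic

theorem levi_comp_perm (f : Fin 8 → Fin 8) (τ : Equiv.Perm (Fin 8)) :
    levi (f ∘ τ) = Equiv.Perm.sign τ * levi f := by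
  unfold levi
  by_cases hf : Function.Bijective f
  · have hfτ : Function.Bijective (f ∘ τ) := hf.comp τ.bijective
    have hprod : Equiv.ofBijective (f ∘ τ) hfτ = Equiv.ofBijective f hf * τ :=
      Equiv.ext fun _ => rfl
    rw [dif_pos hfτ, dif_pos hf, hprod, Equiv.Perm.sign_mul]
    push_cast
    ring
  · have hfτ : ¬ Function.Bijective (f ∘ τ) := fun h => hf <| by
      simpa [Function.comp_assoc] using h.comp τ.symm.bijective
    rw [dif_neg hfτ, dif_neg hf, mul_zero]

theorem gdelta_comp_perm (i j : Fin 4 → Fin 8) (τ : Equiv.Perm (Fin 4)) :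
    gdelta i (j ∘ τ) = Equiv.Perm.sign τ * gdelta i j := by
  unfold gdelta
  rw [Finset.mul_sum, ← Equiv.sum_comp (Equiv.mulRight τ) fun σ =>
    (Equiv.Perm.sign σ : ℝ) * ∏ t, if (j ∘ τ) t = i (σ t) then 1 else 0]
  refine Finset.sum_congr rfl fun σ _ => ?_
  have hprod : ∏ t, (if (j ∘ τ) t = i ((Equiv.mulRight τ σ) t) then (1 : ℝ) else 0)
      = ∏ t, (if j t = i (σ t) then (1 : ℝ) else 0) :=
    Fintype.prod_equiv τ _ _ fun _ => rfl
  rw [hprod, Equiv.coe_mulRight, Equiv.Perm.sign_mul]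
  push_cast
  ring

theorem leviI_comm (I : TetraIdx) (a b : PairIdx) : leviI I a b = leviI I b a := by
  have hswap : (![I.val 0, I.val 1, I.val 2, I.val 3, b.1.1, b.1.2, a.1.1, a.1.2] : Fin 8 → Fin 8)
      = ![I.val 0, I.val 1, I.val 2, I.val 3, a.1.1, a.1.2, b.1.1, b.1.2] ∘
        (Equiv.swap 4 6 * Equiv.swap 5 7 : Equiv.Perm (Fin 8)) := by
    funext t; fin_cases t <;> rfl
  have hsign : Equiv.Perm.sign (Equiv.swap 4 6 * Equiv.swap 5 7 : Equiv.Perm (Fin 8)) = 1 := by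
    decide
  rw [leviI, leviI, hswap, levi_comp_perm, hsign]
  norm_num

theorem gdeltaI_comm (I : TetraIdx) (a b : PairIdx) : gdeltaI I a b = gdeltaI I b a := by
  have hswap : (![b.1.1, b.1.2, a.1.1, a.1.2] : Fin 4 → Fin 8)
      = ![a.1.1, a.1.2, b.1.1, b.1.2] ∘
        (Equiv.swap 0 2 * Equiv.swap 1 3 : Equiv.Perm (Fin 4)) := by
    funext t; fin_cases t <;> rfl
  have hsign : Equiv.Perm.sign (Equiv.swap 0 2 * Equiv.swap 1 3 : Equiv.Perm (Fin 4)) = 1 := by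
    decide
  rw [gdeltaI, gdeltaI, hswap, gdelta_comp_perm, hsign]
  norm_num

theorem extW_mem_sp (M : Matrix (Fin 8) (Fin 8) ℝ) : extW M ∈ sp PairIdx ℝ :=
  fromBlocks_neg_transpose_mem_sp _

theorem hD_mem_sp (d : Fin 8 → ℝ) : hD d ∈ sp PairIdx ℝ :=
  extW_mem_sp _

theorem Jplus_mem_sp (k l : Fin 8) : Jplus k l ∈ sp PairIdx ℝ :=
  (sp PairIdx ℝ).smul_mem _ (add_mem (extW_mem_sp _) (extW_mem_sp _))

theorem lamT_mem_sp (I : TetraIdx) : lamT I ∈ sp PairIdx ℝ :=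
  fromBlocks_zero_mem_sp_of_isSymm (IsSymm.ext fun a b => gdeltaI_comm I a b)
    (IsSymm.ext fun a b => leviI_comm I a b)

theorem iwasawa_coset_symplectic_general (D : Fin 7 → Fin 8 → ℝ)
    (x : Fin 7 → ℝ) (y : PairIdx → ℝ) (z : TetraIdx → ℝ) :
    (iwasawaC D x y z)ᵀ * OmegaW * iwasawaC D x y z = OmegaW := by
  have hC : iwasawaC D x y z ∈ symplecticGroup PairIdx ℝ := by
    refine mul_mem (mul_mem ?_ ?_) ?_
    · exact exp_mem_symplecticGroup <|
        sum_mem fun α _ => (sp PairIdx ℝ).smul_mem _ (hD_mem_sp _)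
    · exact list_prod_map_exp_mem_symplecticGroup _ fun p =>
        (sp PairIdx ℝ).smul_mem _ (Jplus_mem_sp _ _)
    · exact list_prod_map_exp_mem_symplecticGroup _ fun I =>
        (sp PairIdx ℝ).smul_mem _ (lamT_mem_sp I)
  exact SymplecticGroup.mem_iff'.1 hC

/-- For any basis `D₁,…,D₇` of the traceless real diagonal `8×8`
matrices and all real parameters `x^α`, `x^{ij}`, `x^I`, the Iwasawa coset representative
`C(x)` is symplectic: `C(x)ᵀ Ω C(x) = Ω`. -/
theorem iwasawa_coset_symplectic (D : Fin 7 → Fin 8 → ℝ)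
    (htr : ∀ α, ∑ i, D α i = 0) (hbasis : LinearIndependent ℝ D)
    (x : Fin 7 → ℝ) (y : PairIdx → ℝ) (z : TetraIdx → ℝ) :
    (iwasawaC D x y z)ᵀ * OmegaW * iwasawaC D x y z = OmegaW :=
  iwasawa_coset_symplectic_general D x y z
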